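/- arXiv:1107.4744 — 6 statements merged into one kernel-verified Lean document; each statement's English description precedes it below -/
import Mathlib

section
/- Let n ≥ 1 and let a = (a_1,…,a_n) be a tuple of integers with a_j ≥ 0 for all j (convention a_0 = a_{n+1} = 0). If there is exactly one index m ∈ {1,…,n} with 2a_m − a_{m−1} − a_{m+1} > 0, then for that index m one has 2a_m − a_{m−1} − a_{m+1} ≥ 2. -/
/-- **Lemma 2.9 (`lemmacoelargethan2`).**
Let `a = (a_1, …, a_n)` be nonnegative integers (with `a_0 = a_{n+1} = 0`).  If there is
exactly one index `m ∈ {1, …, n}` with `⟨α_m, λ⟩ = 2 a_m − a_{m−1} − a_{m+1} > 0`, then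
for that index `⟨α_m, λ⟩ ≥ 2`. -/
theorem typeA_unique_positive_pairing_ge_two (n : ℕ) (hn : 1 ≤ n) (a : ℕ → ℤ)
    (h0 : a 0 = 0) (hn1 : a (n + 1) = 0)
    (ha : ∀ j, 1 ≤ j → j ≤ n → 0 ≤ a j)
    (m : ℕ) (hm1 : 1 ≤ m) (hm2 : m ≤ n)
    (hmpos : 0 < 2 * a m - a (m - 1) - a (m + 1))
    (huniq : ∀ m', 1 ≤ m' → m' ≤ n → 0 < 2 * a m' - a (m' - 1) - a (m' + 1) → m' = m) :
    2 ≤ 2 * a m - a (m - 1) - a (m + 1) := by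
  -- nonnegativity on all of [0, n+1]
  have hnn : ∀ j, j ≤ n + 1 → 0 ≤ a j := by
    intro j hj
    rcases Nat.eq_zero_or_pos j with h | h
    · simp [h, h0]
    · rcases Nat.lt_or_ge j (n + 1) with h' | h'
      · exact ha j h (by omega)
      · have : j = n + 1 := by omega
        simp [this, hn1]
  -- pairings away from m are nonpositive
  have hnp : ∀ i, 1 ≤ i → i ≤ n → i ≠ m → 2 * a i - a (i - 1) - a (i + 1) ≤ 0 := by
    intro i h1 h2 hne
    by_contra h
    push_neg at h
    exact hne (huniq i h1 h2 h)
  -- upward: if a m ≤ a (m+1) then contradiction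
  have up : ¬ a m ≤ a (m + 1) := by
    intro hstep
    have key : ∀ i, m ≤ i → i ≤ n → a m ≤ a i ∧ a i ≤ a (i + 1) := by
      intro i hi
      induction i, hi using Nat.le_induction with
      | base => intro _; exact ⟨le_refl _, hstep⟩
      | succ i hi ih =>
        intro h2
        obtain ⟨h3, h4⟩ := ih (by omega)
        have hp := hnp (i + 1) (by omega) h2 (by omega)
        simp only [Nat.add_sub_cancel] at hp
        exact ⟨h3.trans h4, by linarith⟩
    obtain ⟨h3, h4⟩ := key n hm2 le_rfl
    have ham : a m = 0 := le_antisymm (by rw [hn1] at h4; linarith) (hnn m (by omega))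
    have h1 : 0 ≤ a (m - 1) := hnn (m - 1) (by omega)
    have h2 : 0 ≤ a (m + 1) := hnn (m + 1) (by omega)
    rw [ham] at hmpos
    linarith
  -- downward: if a m ≤ a (m-1) then contradiction
  have down : ¬ a m ≤ a (m - 1) := by
    intro hstep
    have key : ∀ j, j ≤ m - 1 → a m ≤ a (m - j) ∧ a (m - j) ≤ a (m - j - 1) := by
      intro j
      induction j with
      | zero =>
        intro _
        refine ⟨by simp, ?_⟩
        simpa using hstep
      | succ j ih =>
        intro hj
        obtain ⟨h3, h4⟩ := ih (by omega)
        have hp := hnp (m - j - 1) (by omega) (by omega) (by omega)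
        have e1 : m - j - 1 + 1 = m - j := by omega
        have e2 : m - (j + 1) = m - j - 1 := by omega
        rw [e1] at hp
        rw [e2]
        exact ⟨h3.trans (by linarith), by linarith⟩
    obtain ⟨h3, h4⟩ := key (m - 1) le_rfl
    have e4 : m - (m - 1) = 1 := by omega
    rw [e4] at h3 h4
    simp only [Nat.sub_self] at h4
    have ham : a m = 0 := le_antisymm (by rw [h0] at h4; linarith) (hnn m (by omega))
    have h1 : 0 ≤ a (m - 1) := hnn (m - 1) (by omega)
    have h2 : 0 ≤ a (m + 1) := hnn (m + 1) (by omega)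
    rw [ham] at hmpos
    linarith
  push_neg at up down
  omega
end

section
/- Let n ≥ 1 and let a = (a_1,…,a_n) be a tuple of integers with a_j ≥ 0 for all j (convention a_0 = a_{n+1} = 0). If there is exactly one index m ∈ {1,…,n} with 2a_m − a_{m−1} − a_{m+1} > 0, then the support {j ∈ {1,…,n} : a_j > 0} is a nonempty interval of integers {i, i+1, …, p} with i ≤ m ≤ p. -/
/-- Let `a = (a_1, …, a_n)` be nonnegative integers (with `a_0 = a_{n+1} = 0`).  If there
is exactly one index `m ∈ {1, …, n}` with `⟨α_m, λ⟩ = 2 a_m − a_{m−1} − a_{m+1} > 0`,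
then the support `{j : a_j > 0}` is a nonempty interval `{i, i+1, …, p}` with
`i ≤ m ≤ p`. -/
theorem typeA_unique_positive_pairing_support_interval (n : ℕ) (hn : 1 ≤ n) (a : ℕ → ℤ)
    (h0 : a 0 = 0) (hn1 : a (n + 1) = 0)
    (ha : ∀ j, 1 ≤ j → j ≤ n → 0 ≤ a j)
    (m : ℕ) (hm1 : 1 ≤ m) (hm2 : m ≤ n)
    (hmpos : 0 < 2 * a m - a (m - 1) - a (m + 1))
    (huniq : ∀ m', 1 ≤ m' → m' ≤ n → 0 < 2 * a m' - a (m' - 1) - a (m' + 1) → m' = m) :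
    ∃ i p, 1 ≤ i ∧ i ≤ m ∧ m ≤ p ∧ p ≤ n ∧
      ∀ j, 1 ≤ j → j ≤ n → (0 < a j ↔ i ≤ j ∧ j ≤ p) := by
  -- at every index other than m, the concavity is reversed
  have ha' : ∀ j, 1 ≤ j → j ≤ n → j ≠ m → a j - a (j-1) ≤ a (j+1) - a j := by
    intro j h1 h2 hne
    by_contra h
    exact hne (huniq j h1 h2 (by omega))
  -- differences nondecrease on [1, m]
  have mono_left : ∀ d j, 1 ≤ j → j + d ≤ m → a j - a (j-1) ≤ a (j+d) - a (j+d-1) := by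
    intro d
    induction d with
    | zero => intro j _ _; simp
    | succ d ih =>
      intro j h1 h2
      have hIH := ih j h1 (by omega)
      have h3 := ha' (j+d) (by omega) (by omega) (by omega)
      have e1 : j + (d+1) = j + d + 1 := by omega
      have e2 : j + (d+1) - 1 = j + d := by omega
      rw [e2, e1]
      linarith
  -- differences nondecrease on [m+1, n+1]
  have mono_right : ∀ d j, m + 1 ≤ j → j + d ≤ n + 1 →
      a j - a (j-1) ≤ a (j+d) - a (j+d-1) := by
    intro d
    induction d with
    | zero => intro j _ _; simp
    | succ d ih =>
      intro j h1 h2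
      have hIH := ih j h1 (by omega)
      have h3 := ha' (j+d) (by omega) (by omega) (by omega)
      have e1 : j + (d+1) = j + d + 1 := by omega
      have e2 : j + (d+1) - 1 = j + d := by omega
      rw [e2, e1]
      linarith
  have ha1 : 0 ≤ a 1 := ha 1 le_rfl hn
  -- one-step propagation towards the right on [1, m]
  have step_left : ∀ j, 1 ≤ j → j + 1 ≤ m → 0 < a j → 0 < a (j+1) := by
    intro j h1 h2 hpos
    by_contra h
    have hz : a (j+1) = 0 := le_antisymm (by omega) (ha (j+1) (by omega) (by omega))
    have := mono_left j 1 le_rfl (by omega)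
    simp only [show (1:ℕ) - 1 = 0 from rfl, show 1 + j - 1 = j by omega] at this
    rw [h0, show 1 + j = j + 1 by omega] at this
    omega
  -- one-step propagation towards the left on [m, n]
  have step_right : ∀ j, m + 1 ≤ j → j ≤ n → 0 < a j → 0 < a (j-1) := by
    intro j h1 h2 hpos
    by_contra h
    have hz : a (j-1) = 0 := le_antisymm (by omega) (ha (j-1) (by omega) (by omega))
    have hm := mono_right (n+1-j) j h1 (by omega)
    rw [show j + (n+1-j) - 1 = n by omega, show j + (n+1-j) = n+1 by omega, hn1] at hm
    have han : 0 ≤ a n := ha n hn le_rfl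
    omega
  -- positivity propagates from any supported index up to m
  have prop_left : ∀ d j, 1 ≤ j → j + d ≤ m → 0 < a j → 0 < a (j+d) := by
    intro d
    induction d with
    | zero => intro j _ _ h; simpa using h
    | succ d ih =>
      intro j h1 h2 h3
      have := step_left (j+d) (by omega) (by omega) (ih j h1 (by omega) h3)
      rwa [show j + (d+1) = j + d + 1 by omega]
  -- positivity propagates from any supported index down to m
  have prop_right : ∀ d j, m ≤ j → j + d ≤ n → 0 < a (j+d) → 0 < a j := by
    intro d
    induction d with
    | zero => intro j _ _ h; simpa using h
    | succ d ih =>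
      intro j h1 h2 h3
      have h4 : 0 < a (j+d) := by
        have := step_right (j+d+1) (by omega) (by omega)
          (by rwa [show j + (d+1) = j + d + 1 by omega] at h3)
        rwa [show j + d + 1 - 1 = j + d by omega] at this
      exact ih j h1 (by omega) h4
  -- a m > 0
  have ham : 0 < a m := by
    have h1 : 0 ≤ a (m-1) := by
      rcases Nat.eq_or_lt_of_le hm1 with h | h
      · rw [show m - 1 = 0 by omega, h0]
      · exact ha (m-1) (by omega) (by omega)
    have h2 : 0 ≤ a (m+1) := by
      rcases Nat.eq_or_lt_of_le hm2 with h | h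
      · rw [h, hn1]
      · exact ha (m+1) (by omega) (by omega)
    omega
  -- define the support interval via min and max of the support
  set T : Finset ℕ := (Finset.Icc 1 n).filter (fun j => 0 < a j) with hT
  have hmT : m ∈ T := by
    simp only [hT, Finset.mem_filter, Finset.mem_Icc]
    exact ⟨⟨hm1, hm2⟩, ham⟩
  have hTne : T.Nonempty := ⟨m, hmT⟩
  refine ⟨T.min' hTne, T.max' hTne, ?_, T.min'_le m hmT, T.le_max' m hmT, ?_, ?_⟩
  · have := T.min'_mem hTne
    simp only [hT, Finset.mem_filter, Finset.mem_Icc] at this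
    exact this.1.1
  · have := T.max'_mem hTne
    simp only [hT, Finset.mem_filter, Finset.mem_Icc] at this
    exact this.1.2
  · intro j h1 h2
    constructor
    · intro hpos
      have hjT : j ∈ T := by
        simp only [hT, Finset.mem_filter, Finset.mem_Icc]
        exact ⟨⟨h1, h2⟩, hpos⟩
      exact ⟨T.min'_le j hjT, T.le_max' j hjT⟩
    · rintro ⟨hij, hjp⟩
      have hmem : ∀ x ∈ T, (1 ≤ x ∧ x ≤ n) ∧ 0 < a x := by
        intro x hx
        simpa only [hT, Finset.mem_filter, Finset.mem_Icc] using hx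
      have hiT := hmem _ (T.min'_mem hTne)
      have hpT := hmem _ (T.max'_mem hTne)
      rcases le_or_gt j m with hjm | hjm
      · have him : T.min' hTne ≤ m := T.min'_le m hmT
        have := prop_left (j - T.min' hTne) (T.min' hTne) hiT.1.1 (by omega) hiT.2
        rwa [show T.min' hTne + (j - T.min' hTne) = j by omega] at this
      · have hmp : m ≤ T.max' hTne := T.le_max' m hmT
        have := prop_right (T.max' hTne - j) j (by omega) (by omega)
          (by rw [show j + (T.max' hTne - j) = T.max' hTne by omega]; exact hpT.2)
        exact this
end

section
/- Let n ≥ 1 and let a = (a_1,…,a_n) be a tuple of integers with a_j ≥ 0 for all j (convention a_0 = a_{n+1} = 0). Suppose there is exactly one index m ∈ {1,…,n} with 2a_m − a_{m−1} − a_{m+1} > 0, and let {i, i+1, …, p} (with i ≤ m ≤ p) be the support {j : a_j > 0}. Then a_j < a_{j+1} for all j with i ≤ j < m, and a_j > a_{j+1} for all j with m ≤ j < p. -/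
/-- Let `a = (a_1, …, a_n)` be nonnegative integers (with `a_0 = a_{n+1} = 0`).  Suppose
there is exactly one index `m ∈ {1, …, n}` with `⟨α_m, λ⟩ = 2 a_m − a_{m−1} − a_{m+1} > 0`,
and let `{i, …, p}` (with `i ≤ m ≤ p`) be the support `{j : a_j > 0}`.  Then `a` is
strictly increasing on `{i, …, m}` and strictly decreasing on `{m, …, p}`. -/
theorem typeA_unique_positive_pairing_unimodal (n : ℕ) (hn : 1 ≤ n) (a : ℕ → ℤ)
    (h0 : a 0 = 0) (hn1 : a (n + 1) = 0)
    (ha : ∀ j, 1 ≤ j → j ≤ n → 0 ≤ a j)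
    (m : ℕ) (hm1 : 1 ≤ m) (hm2 : m ≤ n)
    (hmpos : 0 < 2 * a m - a (m - 1) - a (m + 1))
    (huniq : ∀ m', 1 ≤ m' → m' ≤ n → 0 < 2 * a m' - a (m' - 1) - a (m' + 1) → m' = m)
    (i p : ℕ) (hi1 : 1 ≤ i) (him : i ≤ m) (hmp : m ≤ p) (hpn : p ≤ n)
    (hsupp : ∀ j, 1 ≤ j → j ≤ n → (0 < a j ↔ i ≤ j ∧ j ≤ p)) :
    (∀ j, i ≤ j → j < m → a j < a (j + 1)) ∧
    (∀ j, m ≤ j → j < p → a (j + 1) < a j) := by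
  -- convexity away from m: differences are nondecreasing
  have hconv : ∀ k, 1 ≤ k → k ≤ n → k ≠ m → a k - a (k - 1) ≤ a (k + 1) - a k := by
    intro k h1 h2 hne
    have hle : ¬ (0 < 2 * a k - a (k - 1) - a (k + 1)) :=
      fun hp => hne (huniq k h1 h2 hp)
    push_neg at hle
    linarith
  -- monotone differences on [1, m]
  have mono1 : ∀ l, 1 ≤ l → l ≤ m → ∀ k, 1 ≤ k → k ≤ l →
      a k - a (k - 1) ≤ a l - a (l - 1) := by
    intro l h1 h2
    induction l with
    | zero => omega
    | succ l ih =>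
      intro k hk1 hkl
      rcases Nat.lt_or_ge k (l + 1) with hlt | hge
      · have hl1 : 1 ≤ l := by omega
        have hln : l ≤ n := by omega
        have hlm : l ≠ m := by omega
        have := hconv l hl1 hln hlm
        have h2' := ih hl1 (by omega) k hk1 (by omega)
        have : a (l + 1 - 1) = a l := by norm_num
        simp only [Nat.add_sub_cancel] at *
        linarith
      · have : k = l + 1 := by omega
        subst this; exact le_refl _
  -- monotone differences on [m+1, n+1]
  have mono2 : ∀ l, m + 1 ≤ l → l ≤ n + 1 → ∀ k, m + 1 ≤ k → k ≤ l →
      a k - a (k - 1) ≤ a l - a (l - 1) := by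
    intro l h1 h2
    induction l with
    | zero => omega
    | succ l ih =>
      intro k hk1 hkl
      rcases Nat.lt_or_ge k (l + 1) with hlt | hge
      · have hl1 : 1 ≤ l := by omega
        have hln : l ≤ n := by omega
        have hlm : l ≠ m := by omega
        have := hconv l hl1 hln hlm
        have h2' := ih (by omega) (by omega) k hk1 (by omega)
        simp only [Nat.add_sub_cancel] at *
        linarith
      · have : k = l + 1 := by omega
        subst this; exact le_refl _
  -- endpoints of support
  have hain : i ≤ n := le_trans him hm2
  have hai : 0 < a i := (hsupp i hi1 hain).2 ⟨le_refl i, le_trans him hmp⟩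
  have hai1 : a (i - 1) = 0 := by
    rcases Nat.eq_or_lt_of_le hi1 with h | h
    · simp [← h, h0]
    · have h1 : 1 ≤ i - 1 := by omega
      have h2 : i - 1 ≤ n := by omega
      have := (hsupp (i - 1) h1 h2).1
      have hnot : ¬ (0 < a (i - 1)) := fun hp => by have := this hp; omega
      have := ha (i - 1) h1 h2
      omega
  have hap : 0 < a p := (hsupp p (le_trans hm1 hmp) hpn).2 ⟨le_trans him hmp, le_refl p⟩
  have hap1 : a (p + 1) = 0 := by
    rcases Nat.eq_or_lt_of_le hpn with h | h
    · rw [h]; exact hn1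
    · have h1 : 1 ≤ p + 1 := by omega
      have h2 : p + 1 ≤ n := by omega
      have := (hsupp (p + 1) h1 h2).1
      have hnot : ¬ (0 < a (p + 1)) := fun hp' => by have := this hp'; omega
      have := ha (p + 1) h1 h2
      omega
  constructor
  · intro j hij hjm
    have := mono1 (j + 1) (by omega) (by omega) i hi1 (by omega)
    simp only [Nat.add_sub_cancel] at this
    rw [hai1] at this
    linarith
  · intro j hmj hjp
    have := mono2 (p + 1) (by omega) (by omega) (j + 1) (by omega) (by omega)
    simp only [Nat.add_sub_cancel] at this
    rw [hap1] at this
    linarith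
end

section
/- Let n ≥ 1, 1 ≤ k ≤ n and 1 ≤ d ≤ min(k, n+1−k). For 1 ≤ i ≤ m set u_i^{(m)} := s_{m−i+1}⋯s_{m−1}s_m and v_i^{(m)} := s_m s_{m−1}⋯s_{m−i+1} (products in S_{n+1}; function composition with the leftmost factor applied last), and u_0^{(m)} = v_0^{(m)} = id. Then the product v_d^{(k)} u_{d−1}^{(k+d−1)} v_{d−1}^{(k)} u_{d−2}^{(k+d−2)} ⋯ v_2^{(k)} u_1^{(k+1)} s_k equals the block-swap permutation x. -/
/-- The adjacent transposition `s_j = (j, j+1)`, as a permutation of `ℕ`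
(we use permutations of `ℕ` supported on `{1, …, n+1}` to model `S_{n+1}`). -/
def sTrans (j : ℕ) : Equiv.Perm ℕ := Equiv.swap j (j + 1)

/-- `u_i^{(m)} = s_{m−i+1} ⋯ s_{m−1} s_m` (leftmost factor applied last);
`u_0^{(m)} = id`. -/
def uWord (i m : ℕ) : Equiv.Perm ℕ :=
  ((List.range i).map (fun t => sTrans (m - i + 1 + t))).prod

/-- `v_i^{(m)} = s_m s_{m−1} ⋯ s_{m−i+1}` (leftmost factor applied last);
`v_0^{(m)} = id`. -/
def vWord (i m : ℕ) : Equiv.Perm ℕ :=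
  ((List.range i).map (fun t => sTrans (m - t))).prod

lemma vWord_succ (i m : ℕ) : vWord (i + 1) m = vWord i m * sTrans (m - i) := by
  simp [vWord, List.range_succ]

lemma uWord_succ (i m : ℕ) (h : i < m) : uWord (i + 1) m = sTrans (m - i) * uWord i m := by
  unfold uWord
  rw [List.range_succ_eq_map]
  simp only [List.map_cons, List.map_map, List.prod_cons]
  have h1 : m - (i + 1) + 1 = m - i := by omega
  have h2 : ((fun t => sTrans (m - (i + 1) + 1 + t)) ∘ Nat.succ)
      = fun t => sTrans (m - i + 1 + t) := by
    funext t
    simp only [Function.comp_apply]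
    congr 1
    omega
  rw [h2, h1]

lemma vWord_apply (i m : ℕ) (h : i ≤ m) (j : ℕ) :
    vWord i m j = if j = m - i + 1 then m + 1
      else if m - i + 2 ≤ j ∧ j ≤ m + 1 then j - 1 else j := by
  induction i generalizing j with
  | zero =>
    simp only [vWord, List.range_zero, List.map_nil, List.prod_nil, Equiv.Perm.coe_one, id]
    split_ifs <;> omega
  | succ i ih =>
    rw [vWord_succ, Equiv.Perm.mul_apply]
    rw [ih (by omega)]
    simp only [sTrans, Equiv.swap_apply_def]
    split_ifs <;> omega

lemma uWord_apply (i m : ℕ) (h : i ≤ m) (j : ℕ) :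
    uWord i m j = if j = m + 1 then m - i + 1
      else if m - i + 1 ≤ j ∧ j ≤ m then j + 1 else j := by
  induction i generalizing j with
  | zero =>
    simp only [uWord, List.range_zero, List.map_nil, List.prod_nil, Equiv.Perm.coe_one, id]
    split_ifs <;> omega
  | succ i ih =>
    rw [uWord_succ i m (by omega), Equiv.Perm.mul_apply]
    rw [ih (by omega)]
    simp only [sTrans, Equiv.swap_apply_def]
    split_ifs <;> omega

lemma key (k d : ℕ) (hd : d ≤ k) (j : ℕ) :
    ((List.range d).map
      (fun t => vWord (d - t) k * uWord (d - t - 1) (k + d - t - 1))).prod j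
      = if k - d + 1 ≤ j ∧ j ≤ k then j + d
        else if k + 1 ≤ j ∧ j ≤ k + d then j - d else j := by
  induction d generalizing j with
  | zero =>
    simp only [List.range_zero, List.map_nil, List.prod_nil, Equiv.Perm.coe_one, id]
    split_ifs <;> omega
  | succ d ih =>
    have hsplit : ((List.range (d + 1)).map
        (fun t => vWord (d + 1 - t) k * uWord (d + 1 - t - 1) (k + (d + 1) - t - 1))).prod
        = (vWord (d + 1) k * uWord d (k + d)) *
          ((List.range d).map
            (fun t => vWord (d - t) k * uWord (d - t - 1) (k + d - t - 1))).prod := by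
      rw [List.range_succ_eq_map, List.map_cons, List.map_map, List.prod_cons]
      have hh2 : d + 1 - 1 = d := by omega
      have hh3 : k + (d + 1) - 1 = k + d := by omega
      have hfe : ((fun t => vWord (d + 1 - t) k * uWord (d + 1 - t - 1) (k + (d + 1) - t - 1))
            ∘ Nat.succ)
          = fun t => vWord (d - t) k * uWord (d - t - 1) (k + d - t - 1) := by
        funext t
        simp only [Function.comp_apply]
        have e1 : d + 1 - (t + 1) = d - t := by omega
        have e2 : d + 1 - (t + 1) - 1 = d - t - 1 := by omega
        have e3 : k + (d + 1) - (t + 1) - 1 = k + d - t - 1 := by omega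
        simp only [Nat.succ_eq_add_one]
        rw [e1, e3]
      simp only [Nat.sub_zero]
      rw [hh2, hh3, hfe]
    rw [hsplit, Equiv.Perm.mul_apply, Equiv.Perm.mul_apply,
      ih (by omega), uWord_apply d (k + d) (by omega),
      vWord_apply (d + 1) k (by omega)]
    split_ifs <;> omega


/-- The product `v_d^{(k)} u_{d−1}^{(k+d−1)} v_{d−1}^{(k)} u_{d−2}^{(k+d−2)} ⋯
v_2^{(k)} u_1^{(k+1)} s_k` equals the block-swap permutation `x` of `{1, …, n+1}`
(sending `i ↦ i + d` for `k−d+1 ≤ i ≤ k`, `i ↦ i − d` for `k+1 ≤ i ≤ k+d`, and fixing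
all other points).  Note that the final factor `s_k` is `v_1^{(k)} u_0^{(k)}`. -/
theorem blockSwap_word (n k d : ℕ) (hn : 1 ≤ n) (hk1 : 1 ≤ k) (hkn : k ≤ n)
    (hd1 : 1 ≤ d) (hdk : d ≤ k) (hdn : d ≤ n + 1 - k)
    (x : Equiv.Perm ℕ)
    (hx : ∀ i, x i = if k - d + 1 ≤ i ∧ i ≤ k then i + d
      else if k + 1 ≤ i ∧ i ≤ k + d then i - d else i) :
    ((List.range d).map
      (fun t => vWord (d - t) k * uWord (d - t - 1) (k + d - t - 1))).prod = x := by
  ext i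
  rw [hx i]
  exact key k d hdk i
end

section
/- Let n ≥ 1, 1 ≤ k ≤ n and 1 ≤ d ≤ min(k, n+1−k), and let x ∈ S_{n+1} be the block-swap permutation. Let v ∈ S_{n+1} satisfy v(j) < v(j+1) for all j ∈ {1,…,n} with j ≠ k (i.e. v is a minimal length coset representative for the Grassmannian Gr(k, n+1)). If inv(v∘x) = inv(v) − d², then v∘x satisfies (v∘x)(j) < (v∘x)(j+1) for all j ∈ {1,…,n} with j ∉ {k−d, k+d} (i.e. v∘x is a minimal length coset representative for the two-step flag variety Fl(k−d, k+d; n+1)). -/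
/-!
Compare the inversions of `v` and of `v ∘ x`. Relabelling both entries by `x` maps the inversions
of `v` that are not in the block `[k-d+1, k] × [k+1, k+d]` injectively to inversions of `v ∘ x`,
so `inv v ≤ inv (v ∘ x) + #(inversions of v in the block)`. The block has `d²` pairs, so a drop
of exactly `d²` makes every block pair an inversion of `v`; in particular
`v (k+d) < v (k-d+1)`. Away from the two cut points `k - d` and `k + d`, an ascent of `v ∘ x`
is then either an ascent of `v` at some `j ≠ k` or, at `j = k`, exactly this inequality.
-/

/-- The inversion number of a permutation `w` of `{1, …, n+1}` (modelled as a permutation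
of `ℕ` supported on `{1, …, n+1}`): the number of pairs `1 ≤ i < j ≤ n+1` with
`w(i) > w(j)`.  It equals the Coxeter length of `w` in `S_{n+1}`. -/
def invNum (n : ℕ) (w : Equiv.Perm ℕ) : ℕ :=
  ((Finset.Icc 1 (n + 1) ×ˢ Finset.Icc 1 (n + 1)).filter
    (fun p => p.1 < p.2 ∧ w p.2 < w p.1)).card

def blockSwap (k d i : ℕ) : ℕ :=
  if k - d + 1 ≤ i ∧ i ≤ k then i + d else if k + 1 ≤ i ∧ i ≤ k + d then i - d else i

def blockPairs (k d : ℕ) : Finset (ℕ × ℕ) :=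
  Finset.Icc (k - d + 1) k ×ˢ Finset.Icc (k + 1) (k + d)

section BlockSwap

variable {n k d : ℕ}

theorem blockSwap_involutive (hdk : d ≤ k) : Function.Involutive (blockSwap k d) := by
  intro i
  unfold blockSwap
  split_ifs <;> omega

theorem blockSwap_mem_Icc (hdk : d ≤ k) (hkd : k + d ≤ n + 1) {i : ℕ}
    (hi : i ∈ Finset.Icc 1 (n + 1)) : blockSwap k d i ∈ Finset.Icc 1 (n + 1) := by
  rw [Finset.mem_Icc] at hi ⊢
  unfold blockSwap
  split_ifs <;> omega

theorem blockSwap_lt_blockSwap (hdk : d ≤ k) {i j : ℕ} (hij : i < j)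
    (hp : (i, j) ∉ blockPairs k d) :
    blockSwap k d i < blockSwap k d j := by
  simp only [blockPairs, Finset.mem_product, Finset.mem_Icc] at hp
  unfold blockSwap
  split_ifs <;> omega

theorem card_blockPairs (hdk : d ≤ k) : (blockPairs k d).card = d ^ 2 := by
  rw [blockPairs, Finset.card_product, Nat.card_Icc, Nat.card_Icc, sq]
  congr 1 <;> omega

theorem invNum_le_invNum_mul_add_card_filter_blockPairs (hdk : d ≤ k) (hkd : k + d ≤ n + 1)
    (w : Equiv.Perm ℕ) {x : Equiv.Perm ℕ} (hx : ⇑x = blockSwap k d) :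
    invNum n w ≤
      invNum n (w * x) + ((blockPairs k d).filter fun p => w p.2 < w p.1).card := by
  set A := (Finset.Icc 1 (n + 1) ×ˢ Finset.Icc 1 (n + 1)).filter
    (fun p => p.1 < p.2 ∧ w p.2 < w p.1)
  have outside : (A.filter (· ∉ blockPairs k d)).card ≤ invNum n (w * x) := by
    refine Finset.card_le_card_of_injOn (Prod.map x x) ?_ ?_
    · intro p hp
      simp only [A, Finset.coe_filter, Set.mem_ofPred_eq, Finset.mem_filter,
        Finset.mem_product] at hp
      obtain ⟨⟨⟨hp1, hp2⟩, hlt, hinv⟩, hout⟩ := hp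
      simp only [Finset.coe_filter, Set.mem_ofPred_eq, Finset.mem_product, Prod.map_fst,
        Prod.map_snd, Equiv.Perm.coe_mul, Function.comp_apply, hx, blockSwap_involutive hdk _]
      exact ⟨⟨blockSwap_mem_Icc hdk hkd hp1, blockSwap_mem_Icc hdk hkd hp2⟩,
        blockSwap_lt_blockSwap hdk hlt hout, hinv⟩
    · exact (Prod.map_injective.mpr ⟨x.injective, x.injective⟩).injOn
  have inside : (A.filter (· ∈ blockPairs k d)).card ≤
      ((blockPairs k d).filter fun p => w p.2 < w p.1).card := by
    refine Finset.card_le_card fun p hp => ?_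
    simp only [A, Finset.mem_filter] at hp ⊢
    exact ⟨hp.2, hp.1.2.2⟩
  calc invNum n w = (A.filter (· ∈ blockPairs k d)).card
        + (A.filter (· ∉ blockPairs k d)).card :=
        (Finset.card_filter_add_card_filter_not _).symm
    _ ≤ _ := by omega

theorem lt_of_mem_blockPairs_of_invNum_eq (hdk : d ≤ k) (hkd : k + d ≤ n + 1)
    {w x : Equiv.Perm ℕ} (hx : ⇑x = blockSwap k d)
    (hlen : invNum n w = invNum n (w * x) + d ^ 2) :
    ∀ p ∈ blockPairs k d, w p.2 < w p.1 := by
  have hle := invNum_le_invNum_mul_add_card_filter_blockPairs hdk hkd w hx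
  refine Finset.card_filter_eq_iff.mp (le_antisymm (Finset.card_filter_le _ _) ?_)
  rw [card_blockPairs hdk]
  omega

theorem mul_blockSwap_lt_of_grassmannian (hdk : d ≤ k) (hkd : k + d ≤ n + 1)
    {v x : Equiv.Perm ℕ} (hx : ⇑x = blockSwap k d)
    (hvgrass : ∀ j, 1 ≤ j → j ≤ n → j ≠ k → v j < v (j + 1))
    (hcorner : v (k + d) < v (k - d + 1)) {j : ℕ} (hj1 : 1 ≤ j) (hjn : j ≤ n)
    (hjk1 : j ≠ k - d) (hjk2 : j ≠ k + d) : (v * x) j < (v * x) (j + 1) := by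
  rw [Equiv.Perm.coe_mul, Function.comp_apply, Function.comp_apply, hx]
  unfold blockSwap
  split_ifs
  · rw [show j + 1 + d = j + d + 1 by omega]
    exact hvgrass (j + d) (by omega) (by omega) (by omega)
  · rwa [show j + d = k + d by omega, show j + 1 - d = k - d + 1 by omega]
  · omega
  · omega
  · rw [show j + 1 - d = j - d + 1 by omega]
    exact hvgrass (j - d) (by omega) (by omega) (by omega)
  · omega
  · omega
  · omega
  · exact hvgrass j hj1 hjn (by omega)

end BlockSwap

theorem blockSwap_two_step_representative_general (n k d : ℕ)
    (hkn : k ≤ n) (hd1 : 1 ≤ d) (hdk : d ≤ k) (hdn : d ≤ n + 1 - k)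
    (x : Equiv.Perm ℕ)
    (hx : ∀ i, x i = if k - d + 1 ≤ i ∧ i ≤ k then i + d
      else if k + 1 ≤ i ∧ i ≤ k + d then i - d else i)
    (v : Equiv.Perm ℕ)
    (hvgrass : ∀ j, 1 ≤ j → j ≤ n → j ≠ k → v j < v (j + 1))
    (hlen : (invNum n (v * x) : ℤ) = (invNum n v : ℤ) - d ^ 2) :
    ∀ j, 1 ≤ j → j ≤ n → j ≠ k - d → j ≠ k + d → (v * x) j < (v * x) (j + 1) := by
  have hkd : k + d ≤ n + 1 := by omega
  have hx' : ⇑x = blockSwap k d := funext hx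
  have hdrop : invNum n v = invNum n (v * x) + d ^ 2 := by
    have : (invNum n v : ℤ) = invNum n (v * x) + d ^ 2 := by linarith
    exact_mod_cast this
  have hcorner : v (k + d) < v (k - d + 1) :=
    lt_of_mem_blockPairs_of_invNum_eq hdk hkd hx' hdrop (k - d + 1, k + d) (by
      simp only [blockPairs, Finset.mem_product, Finset.mem_Icc]
      omega)
  intro j hj1 hjn hjk1 hjk2
  exact mul_blockSwap_lt_of_grassmannian hdk hkd hx' hvgrass hcorner hj1 hjn hjk1 hjk2

/-- **Lemma 2.15 (`lemmafortwostepele`).**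
If `v` is a minimal length coset representative for the Grassmannian `Gr(k, n+1)`
(i.e. `v(j) < v(j+1)` for all `j ≠ k`) and `inv(v∘x) = inv(v) − d²` for the block-swap
permutation `x`, then `v∘x` is a minimal length coset representative for the two-step
flag variety `Fl(k−d, k+d; n+1)` (i.e. `(v∘x)(j) < (v∘x)(j+1)` for `j ∉ {k−d, k+d}`). -/
theorem blockSwap_two_step_representative (n k d : ℕ) (hn : 1 ≤ n) (hk1 : 1 ≤ k)
    (hkn : k ≤ n) (hd1 : 1 ≤ d) (hdk : d ≤ k) (hdn : d ≤ n + 1 - k)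
    (x : Equiv.Perm ℕ)
    (hx : ∀ i, x i = if k - d + 1 ≤ i ∧ i ≤ k then i + d
      else if k + 1 ≤ i ∧ i ≤ k + d then i - d else i)
    (v : Equiv.Perm ℕ)
    (hvfix : ∀ i, i ∉ Finset.Icc 1 (n + 1) → v i = i)
    (hvgrass : ∀ j, 1 ≤ j → j ≤ n → j ≠ k → v j < v (j + 1))
    (hlen : (invNum n (v * x) : ℤ) = (invNum n v : ℤ) - d ^ 2) :
    ∀ j, 1 ≤ j → j ≤ n → j ≠ k - d → j ≠ k + d → (v * x) j < (v * x) (j + 1) :=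
  blockSwap_two_step_representative_general n k d hkn hd1 hdk hdn x hx v hvgrass hlen
end

section
/- Let n ≥ 1, 1 ≤ k ≤ n and d ≥ 1 be integers. Write d = m_1 k + r_1 with m_1 ≥ 0 and 1 ≤ r_1 ≤ k, and d = m_2 (n+1−k) + r_2 with m_2 ≥ 0 and 1 ≤ r_2 ≤ n+1−k. Define integers a_0, a_1, …, a_{n+1} by: a_0 = a_{n+1} = 0; a_i = m_1·i + max(0, i − (k − r_1)) for 1 ≤ i ≤ k−1; a_k = d; and a_i = m_2·(n+1−i) + max(0, (k + r_2) − i) for k+1 ≤ i ≤ n. Then for every i ∈ {1,…,n}: 2a_i − a_{i−1} − a_{i+1} equals m_1 + m_2 + 2 if i = k; equals −1 if i = k − r_1 or i = k + r_2; and equals 0 otherwise. (In particular, the coroot λ = Σ_{i=1}^n a_i α_i^∨ of the type A_n root system satisfies ⟨α_i, λ⟩ ∈ {0, −1} for all simple roots α_i with i ≠ k, so λ is the Peterson–Woodward lift λ_B of the degree d class for the Grassmannian Gr(k, n+1).) -/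
/-- The explicit coroot `λ_B = Σ a_i α_i^∨` (Peterson–Woodward lift of the degree `d`
class for `Gr(k, n+1)`) pairs with the simple roots of `A_n` as follows:
`⟨α_k, λ_B⟩ = m_1 + m_2 + 2`, `⟨α_i, λ_B⟩ = −1` for `i ∈ {k − r_1, k + r_2}`, and
`⟨α_i, λ_B⟩ = 0` otherwise, where `d = m_1 k + r_1 = m_2 (n+1−k) + r_2` with
`1 ≤ r_1 ≤ k`, `1 ≤ r_2 ≤ n+1−k`. -/
theorem grassmannian_lift_pairings (n k d m1 r1 m2 r2 : ℕ) (hn : 1 ≤ n)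
    (hk1 : 1 ≤ k) (hkn : k ≤ n) (hd : 1 ≤ d)
    (hdec1 : d = m1 * k + r1) (hr1a : 1 ≤ r1) (hr1b : r1 ≤ k)
    (hdec2 : d = m2 * (n + 1 - k) + r2) (hr2a : 1 ≤ r2) (hr2b : r2 ≤ n + 1 - k)
    (a : ℕ → ℤ) (ha0 : a 0 = 0) (han : a (n + 1) = 0)
    (hlow : ∀ i, 1 ≤ i → i ≤ k - 1 →
      a i = (m1 : ℤ) * i + max 0 ((i : ℤ) - ((k : ℤ) - (r1 : ℤ))))
    (hak : a k = d)
    (hhigh : ∀ i, k + 1 ≤ i → i ≤ n →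
      a i = (m2 : ℤ) * ((n : ℤ) + 1 - (i : ℤ)) + max 0 (((k : ℤ) + (r2 : ℤ)) - (i : ℤ))) :
    ∀ i, 1 ≤ i → i ≤ n →
      2 * a i - a (i - 1) - a (i + 1) =
        if i = k then (m1 : ℤ) + (m2 : ℤ) + 2
        else if i = k - r1 ∨ i = k + r2 then -1
        else 0 := by
  -- casted versions of the decompositions
  have hd1 : (d : ℤ) = (m1 : ℤ) * k + r1 := by exact_mod_cast hdec1
  have ht : ((n + 1 - k : ℕ) : ℤ) = (n : ℤ) + 1 - k := by omega
  have hd2 : (d : ℤ) = (m2 : ℤ) * ((n : ℤ) + 1 - k) + r2 := by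
    rw [← ht]; exact_mod_cast hdec2
  -- extend the low formula to 0 ≤ j ≤ k
  have hlow' : ∀ j : ℕ, j ≤ k →
      a j = (m1 : ℤ) * j + max 0 ((j : ℤ) - ((k : ℤ) - (r1 : ℤ))) := by
    intro j hj
    rcases Nat.eq_zero_or_pos j with h0 | h1
    · subst h0
      rw [ha0, max_eq_left (by push_cast; omega)]
      simp
    · rcases eq_or_lt_of_le hj with hjk | hjk
      · subst hjk
        rw [hak, max_eq_right (by omega), hd1]
        ring
      · exact hlow j h1 (by omega)
  -- extend the high formula to k ≤ j ≤ n+1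
  have hhigh' : ∀ j : ℕ, k ≤ j → j ≤ n + 1 →
      a j = (m2 : ℤ) * ((n : ℤ) + 1 - j) + max 0 ((k : ℤ) + (r2 : ℤ) - j) := by
    intro j hj1 hj2
    rcases eq_or_lt_of_le hj1 with hjk | hjk
    · subst hjk
      rw [hak, max_eq_right (by omega), hd2]
      ring
    · rcases eq_or_lt_of_le hj2 with hjn | hjn
      · subst hjn
        rw [han, max_eq_left (by omega)]
        push_cast; ring
      · exact hhigh j (by omega) (by omega)
  intro i hi1 hin
  have hci : ((i - 1 : ℕ) : ℤ) = (i : ℤ) - 1 := by omega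
  rcases lt_trichotomy i k with hik | hik | hik
  · -- i < k
    have e0 := hlow' (i - 1) (by omega)
    have e1 := hlow' i (by omega)
    have e2 := hlow' (i + 1) (by omega)
    rw [e0, e1, e2, hci]
    push_cast
    rw [if_neg (by omega : ¬ i = k)]
    by_cases h : i = k - r1
    · rw [if_pos (Or.inl h)]
      rw [max_eq_left (by omega), max_eq_left (by omega), max_eq_right (by omega)]
      have hic : (i : ℤ) = (k : ℤ) - r1 := by omega
      rw [hic]; ring
    · rw [if_neg (by omega : ¬ (i = k - r1 ∨ i = k + r2))]
      rcases lt_or_ge (i : ℤ) ((k : ℤ) - r1) with hlt | hge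
      · rw [max_eq_left (by omega), max_eq_left (by omega), max_eq_left (by omega)]
        ring
      · rw [max_eq_right (by omega), max_eq_right (by omega), max_eq_right (by omega)]
        ring
  · -- i = k
    subst hik
    have e0 := hlow' (i - 1) (by omega)
    have e2 := hhigh' (i + 1) (by omega) (by omega)
    rw [e0, hak, e2, hci, if_pos rfl]
    push_cast
    rw [max_eq_right (by omega), max_eq_right (by omega)]
    linear_combination hd1 + hd2
  · -- i > k
    have e0 := hhigh' (i - 1) (by omega) (by omega)
    have e1 := hhigh' i (by omega) (by omega)
    have e2 := hhigh' (i + 1) (by omega) (by omega)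
    rw [e0, e1, e2, hci]
    push_cast
    rw [if_neg (by omega : ¬ i = k)]
    by_cases h : i = k + r2
    · rw [if_pos (Or.inr h)]
      rw [max_eq_right (by omega), max_eq_right (by omega), max_eq_left (by omega)]
      have hic : (i : ℤ) = (k : ℤ) + r2 := by omega
      rw [hic]; ring
    · rw [if_neg (by omega : ¬ (i = k - r1 ∨ i = k + r2))]
      rcases lt_or_ge (i : ℤ) ((k : ℤ) + r2) with hlt | hge
      · rw [max_eq_right (by omega), max_eq_right (by omega), max_eq_right (by omega)]
        ring
      · rw [max_eq_left (by omega), max_eq_left (by omega), max_eq_left (by omega)]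
        ring
end
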